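/- arXiv:2107.07196 — 4 statements merged into one kernel-verified Lean document; each statement's English description precedes it below -/
import Mathlib

section
/- Let Γ : ℝ → [0,∞) be bounded with Γ_max = sup Γ, let ω_c, κ > 0, and define Γ₁(ω) = (κ/π)·∫_{−ω_c}^{ω_c} Γ(ν)/((ω−ν)² + κ²) dν. If Γ is differentiable on [−ω_c, ω_c] with Γ'_max = sup_{|ω|≤ω_c}|Γ'(ω)|, then for every ω ∈ [−ω_c, ω_c], |Γ₁(ω) − Γ(ω)| ≤ Γ(ω)·(1 − (1/π)·arctan(|ω−ω_c|/κ) − (1/π)·arctan(|ω+ω_c|/κ)) + (κ·Γ'_max/(2π))·(log(((ω−ω_c)² + κ²)/κ²) + log(((ω+ω_c)² + κ²)/κ²)). -/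
/-!
Write `K(ν) = 1 / ((ω - ν)² + κ²)`. Then
`Γ₁(ω) - Γ(ω) = (κ/π) ∫ (Γ(ν) - Γ(ω)) K(ν) dν - Γ(ω) (1 - (κ/π) ∫ K)`, all integrals over the
window. The mass `(κ/π) ∫ K` is an explicit sum of two arctangents, and lies in `[0, 1]` because the
Lorentzian has total mass `1`. The first term is bounded, via the mean value inequality, by
`(κ/π) Γ'_max ∫ |ν - ω| K(ν) dν`, which is an explicit sum of two logarithms.
-/

open MeasureTheory Real

section Lorentzian

variable {κ : ℝ}

lemma hasDerivAt_arctan_sub_div_div (hκ : κ ≠ 0) (x ν : ℝ) :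
    HasDerivAt (fun t => arctan ((t - x) / κ) / κ) (1 / ((x - ν) ^ 2 + κ ^ 2)) ν := by
  have h := (((hasDerivAt_id' ν).sub_const x).div_const κ).arctan.div_const κ
  refine h.congr_deriv ?_
  field_simp
  ring

lemma hasDerivAt_log_sq_add_sq_div_two (hκ : κ ≠ 0) (x ν : ℝ) :
    HasDerivAt (fun t => log ((t - x) ^ 2 + κ ^ 2) / 2) ((ν - x) / ((x - ν) ^ 2 + κ ^ 2)) ν := by
  have hpos : (ν - x) ^ 2 + κ ^ 2 ≠ 0 := by positivity
  have h := ((((hasDerivAt_id' ν).sub_const x).fun_pow 2).add_const (κ ^ 2)).log hpos |>.div_const 2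
  refine h.congr_deriv ?_
  rw [show (x - ν) ^ 2 = (ν - x) ^ 2 by ring]
  field_simp
  ring

lemma integral_one_div_sub_sq_add_sq (hκ : κ ≠ 0) (x a b : ℝ) :
    ∫ ν in a..b, 1 / ((x - ν) ^ 2 + κ ^ 2) =
      arctan ((b - x) / κ) / κ - arctan ((a - x) / κ) / κ :=
  intervalIntegral.integral_eq_sub_of_hasDerivAt
    (fun ν _ => hasDerivAt_arctan_sub_div_div hκ x ν)
    ((continuous_const.div (by fun_prop) fun ν => by positivity).intervalIntegrable a b)

lemma integral_sub_div_sub_sq_add_sq_from_center (hκ : κ ≠ 0) (x b : ℝ) :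
    ∫ ν in x..b, (ν - x) / ((x - ν) ^ 2 + κ ^ 2) = log (((x - b) ^ 2 + κ ^ 2) / κ ^ 2) / 2 := by
  rw [intervalIntegral.integral_eq_sub_of_hasDerivAt
    (fun ν _ => hasDerivAt_log_sq_add_sq_div_two hκ x ν)
    (((by fun_prop : Continuous fun ν => ν - x).div (by fun_prop)
      fun ν => by positivity).intervalIntegrable x b),
    log_div (by positivity) (by positivity)]
  ring_nf

lemma integral_abs_sub_div_sub_sq_add_sq (hκ : κ ≠ 0) {x a b : ℝ} (hax : a ≤ x) (hxb : x ≤ b) :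
    ∫ ν in a..b, |ν - x| / ((x - ν) ^ 2 + κ ^ 2) =
      (log (((x - b) ^ 2 + κ ^ 2) / κ ^ 2) + log (((x - a) ^ 2 + κ ^ 2) / κ ^ 2)) / 2 := by
  have hint : ∀ c d, IntervalIntegrable (fun ν => |ν - x| / ((x - ν) ^ 2 + κ ^ 2)) volume c d :=
    fun c d => ((by fun_prop : Continuous fun ν => |ν - x|).div (by fun_prop)
      fun ν => by positivity).intervalIntegrable c d
  have hleft : ∫ ν in a..x, |ν - x| / ((x - ν) ^ 2 + κ ^ 2) =
      -∫ ν in a..x, (ν - x) / ((x - ν) ^ 2 + κ ^ 2) := by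
    rw [← intervalIntegral.integral_neg]
    refine intervalIntegral.integral_congr fun ν hν => ?_
    rw [Set.uIcc_of_le hax] at hν
    simp only [abs_of_nonpos (sub_nonpos.mpr hν.2), neg_div]
  have hright : ∫ ν in x..b, |ν - x| / ((x - ν) ^ 2 + κ ^ 2) =
      ∫ ν in x..b, (ν - x) / ((x - ν) ^ 2 + κ ^ 2) := by
    refine intervalIntegral.integral_congr fun ν hν => ?_
    rw [Set.uIcc_of_le hxb] at hν
    simp only [abs_of_nonneg (sub_nonneg.mpr hν.1)]
  rw [← intervalIntegral.integral_add_adjacent_intervals (hint a x) (hint x b), hleft, hright,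
    ← intervalIntegral.integral_symm, integral_sub_div_sub_sq_add_sq_from_center hκ,
    integral_sub_div_sub_sq_add_sq_from_center hκ]
  ring

lemma lorentzian_mass_eq (hκ : 0 < κ) {x a b : ℝ} (hax : a ≤ x) (hxb : x ≤ b) :
    κ / π * ∫ ν in a..b, 1 / ((x - ν) ^ 2 + κ ^ 2) =
      1 / π * arctan (|x - b| / κ) + 1 / π * arctan (|x - a| / κ) := by
  rw [integral_one_div_sub_sq_add_sq hκ.ne', abs_of_nonpos (sub_nonpos.mpr hxb),
    abs_of_nonneg (sub_nonneg.mpr hax), show (a - x) / κ = -((x - a) / κ) by ring, arctan_neg]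
  field_simp
  ring_nf

lemma lorentzian_mass_le_one (hκ : 0 < κ) {x a b : ℝ} (hax : a ≤ x) (hxb : x ≤ b) :
    κ / π * ∫ ν in a..b, 1 / ((x - ν) ^ 2 + κ ^ 2) ≤ 1 := by
  rw [lorentzian_mass_eq hκ hax hxb, ← mul_add, one_div_mul_eq_div, div_le_one pi_pos]
  linarith [arctan_lt_pi_div_two (|x - b| / κ), arctan_lt_pi_div_two (|x - a| / κ)]

end Lorentzian

lemma abs_integral_mul_sub_mul_integral_le {f w : ℝ → ℝ} {a b x L : ℝ} (hab : a ≤ b)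
    (hf : ContinuousOn f (Set.Icc a b)) (hw : Continuous w) (hw0 : ∀ ν, 0 ≤ w ν)
    (hL : ∀ ν ∈ Set.Icc a b, |f ν - f x| ≤ L * |ν - x|) :
    |(∫ ν in a..b, f ν * w ν) - f x * ∫ ν in a..b, w ν| ≤ L * ∫ ν in a..b, |ν - x| * w ν := by
  have hfw : IntervalIntegrable (fun ν => f ν * w ν) volume a b :=
    (hf.mul hw.continuousOn).intervalIntegrable_of_Icc hab
  rw [← intervalIntegral.integral_const_mul, ← intervalIntegral.integral_sub hfw
    ((hw.intervalIntegrable a b).const_mul _), ← intervalIntegral.integral_const_mul]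
  refine (intervalIntegral.abs_integral_le_integral_abs hab).trans
    (intervalIntegral.integral_mono_on hab ?_ ?_ fun ν hν => ?_)
  · exact ContinuousOn.intervalIntegrable_of_Icc hab (by fun_prop)
  · exact (by fun_prop : Continuous fun ν => L * (|ν - x| * w ν)).intervalIntegrable a b
  · rw [← sub_mul, abs_mul, abs_of_nonneg (hw0 ν), ← mul_assoc]
    exact mul_le_mul_of_nonneg_right (hL ν hν) (hw0 ν)

theorem stmt_3_general (Γ Γ' : ℝ → ℝ) (Γdmax ωc κ : ℝ)
    (hκ : 0 < κ)
    (hnn : ∀ ω, 0 ≤ Γ ω)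
    (hderiv : ∀ ω ∈ Set.Icc (-ωc) ωc, HasDerivAt Γ (Γ' ω) ω)
    (hΓd : ∀ ω ∈ Set.Icc (-ωc) ωc, |Γ' ω| ≤ Γdmax)
    (Γ₁ : ℝ → ℝ)
    (hΓ₁ : ∀ ω, Γ₁ ω = (κ / Real.pi) *
        ∫ ν in Set.Icc (-ωc) ωc, Γ ν / ((ω - ν) ^ 2 + κ ^ 2)) :
    ∀ ω ∈ Set.Icc (-ωc) ωc,
      |Γ₁ ω - Γ ω| ≤
        Γ ω * (1 - (1 / Real.pi) * Real.arctan (|ω - ωc| / κ)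
                 - (1 / Real.pi) * Real.arctan (|ω + ωc| / κ))
        + (κ * Γdmax / (2 * Real.pi)) *
            (Real.log (((ω - ωc) ^ 2 + κ ^ 2) / κ ^ 2)
              + Real.log (((ω + ωc) ^ 2 + κ ^ 2) / κ ^ 2)) := by
  rintro ω hω
  have hab : -ωc ≤ ωc := hω.1.trans hω.2
  have hlip : ∀ ν ∈ Set.Icc (-ωc) ωc, |Γ ν - Γ ω| ≤ Γdmax * |ν - ω| := fun ν hν => by
    simpa only [Real.norm_eq_abs] using
      (convex_Icc (-ωc) ωc).norm_image_sub_le_of_norm_hasDerivWithin_le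
        (fun y hy => (hderiv y hy).hasDerivWithinAt) hΓd hω hν
  have herr := abs_integral_mul_sub_mul_integral_le (w := fun ν => 1 / ((ω - ν) ^ 2 + κ ^ 2)) hab
    (fun y hy => (hderiv y hy).continuousAt.continuousWithinAt)
    (continuous_const.div (by fun_prop) fun ν => by positivity) (fun ν => by positivity) hlip
  simp only [mul_one_div, integral_abs_sub_div_sub_sq_add_sq hκ.ne' hω.1 hω.2] at herr
  have hΓ₁ω : Γ₁ ω = κ / π * ∫ ν in -ωc..ωc, Γ ν / ((ω - ν) ^ 2 + κ ^ 2) := by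
    rw [hΓ₁, intervalIntegral.integral_of_le hab, integral_Icc_eq_integral_Ioc]
  have hmass := lorentzian_mass_eq hκ hω.1 hω.2
  have hmass_le := lorentzian_mass_le_one hκ hω.1 hω.2
  simp only [sub_neg_eq_add] at hmass hmass_le herr
  rw [hΓ₁ω, sub_sub, ← hmass]
  generalize (∫ ν in -ωc..ωc, Γ ν / ((ω - ν) ^ 2 + κ ^ 2)) = I at herr ⊢
  generalize (∫ ν in -ωc..ωc, 1 / ((ω - ν) ^ 2 + κ ^ 2)) = M at herr hmass_le ⊢
  have hcoef : 0 ≤ κ / π := div_nonneg hκ.le pi_pos.le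
  calc |κ / π * I - Γ ω|
      = |κ / π * (I - Γ ω * M) - Γ ω * (1 - κ / π * M)| := by ring_nf
    _ ≤ |κ / π * (I - Γ ω * M)| + |Γ ω * (1 - κ / π * M)| := abs_sub _ _
    _ = κ / π * |I - Γ ω * M| + Γ ω * (1 - κ / π * M) := by
      rw [abs_mul, abs_of_nonneg hcoef, abs_of_nonneg (mul_nonneg (hnn ω) (sub_nonneg.2 hmass_le))]
    _ ≤ κ / π * (Γdmax * ((log (((ω - ωc) ^ 2 + κ ^ 2) / κ ^ 2)
          + log (((ω + ωc) ^ 2 + κ ^ 2) / κ ^ 2)) / 2)) + Γ ω * (1 - κ / π * M) := by gcongr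
    _ = _ := by ring

/-- Pointwise error bound for the Lorentzian mollification `Γ₁` of a bounded nonnegative
function `Γ` on `[−ω_c, ω_c]`: for `ω` in the window,
`|Γ₁(ω) − Γ(ω)| ≤ Γ(ω)(1 − arctan(|ω−ω_c|/κ)/π − arctan(|ω+ω_c|/κ)/π)
  + (κ Γ'_max/(2π))(log(((ω−ω_c)²+κ²)/κ²) + log(((ω+ω_c)²+κ²)/κ²))`,
where `Γ'_max` is any bound on `|Γ'|` over the window. -/
theorem stmt_3 (Γ Γ' : ℝ → ℝ) (Γmax Γdmax ωc κ : ℝ)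
    (hωc : 0 < ωc) (hκ : 0 < κ)
    (hnn : ∀ ω, 0 ≤ Γ ω) (hbdd : ∀ ω, Γ ω ≤ Γmax)
    (hderiv : ∀ ω ∈ Set.Icc (-ωc) ωc, HasDerivAt Γ (Γ' ω) ω)
    (hΓd : ∀ ω ∈ Set.Icc (-ωc) ωc, |Γ' ω| ≤ Γdmax)
    (Γ₁ : ℝ → ℝ)
    (hΓ₁ : ∀ ω, Γ₁ ω = (κ / Real.pi) *
        ∫ ν in Set.Icc (-ωc) ωc, Γ ν / ((ω - ν) ^ 2 + κ ^ 2)) :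
    ∀ ω ∈ Set.Icc (-ωc) ωc,
      |Γ₁ ω - Γ ω| ≤
        Γ ω * (1 - (1 / Real.pi) * Real.arctan (|ω - ωc| / κ)
                 - (1 / Real.pi) * Real.arctan (|ω + ωc| / κ))
        + (κ * Γdmax / (2 * Real.pi)) *
            (Real.log (((ω - ωc) ^ 2 + κ ^ 2) / κ ^ 2)
              + Real.log (((ω + ωc) ^ 2 + κ ^ 2) / κ ^ 2)) :=
  stmt_3_general Γ Γ' Γdmax ωc κ hκ hnn hderiv hΓd Γ₁ hΓ₁
end

section
/- Let Γ : ℝ → [0,∞) be bounded with Γ_max = sup Γ, let ω_c, κ > 0, M ≥ 2, δ = 2ω_c/(M−1), ω_n = −ω_c + (n−1)δ for n = 1,…,M, and let Γ̂(ω) = Σ_{n=1}^M (κδ/π)·Γ(ω_n)/((ω−ω_n)² + κ²). Then ∫_{|ω| ≥ ω_c} |Γ̂(ω)| dω ≤ δ·Γ_max + (2δ·Γ_max/π)·Σ_{n=1}^{M−1} arctan(κ/(nδ)). -/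
/-!
Bounding every sample `Γ(ω_n)` by `Γ_max`, the tail integral is at most `δ Γ_max / π` times
the sum of the tail masses of the `M` Lorentzians `κ / ((x - a)² + κ²)`. With the
antiderivative `arctan ((x - a) / κ)`, the tail mass of the one centred at `a` is
`π - arctan ((ω_c - a) / κ) - arctan ((ω_c + a) / κ)`. On the grid, `ω_c - ω_n` and
`ω_c + ω_n` both run over `k δ`, `k = 0, …, M - 1`, and
`arctan (k δ / κ) = π / 2 - arctan (κ / (k δ))` turns the sum of the tail masses into
`π + 2 ∑_{k=1}^{M-1} arctan (κ / (k δ))`.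
-/

open MeasureTheory Real Set Filter Topology

noncomputable def lorentzian (κ a x : ℝ) : ℝ := κ / ((x - a) ^ 2 + κ ^ 2)

section Lorentzian

variable {κ : ℝ} (a : ℝ)

theorem lorentzian_eq_inv_one_add_sq (hκ : κ ≠ 0) (x : ℝ) :
    lorentzian κ a x = κ⁻¹ * (1 + ((x - a) / κ) ^ 2)⁻¹ := by
  unfold lorentzian
  field_simp
  ring

theorem integrable_lorentzian (hκ : κ ≠ 0) : Integrable (lorentzian κ a) :=
  ((integrable_inv_one_add_sq.comp_div hκ).comp_sub_right a |>.const_mul κ⁻¹).congr <|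
    .of_forall fun x => (lorentzian_eq_inv_one_add_sq a hκ x).symm

theorem hasDerivAt_arctan_sub_div (hκ : κ ≠ 0) (x : ℝ) :
    HasDerivAt (fun x => arctan ((x - a) / κ)) (lorentzian κ a x) x := by
  refine ((hasDerivAt_arctan _).comp x
    (((hasDerivAt_id x).sub_const a).div_const κ)).congr_deriv ?_
  rw [lorentzian_eq_inv_one_add_sq a hκ]
  simp only [one_div, id]
  ring

theorem integral_lorentzian (hκ : 0 < κ) : ∫ x, lorentzian κ a x = π := by
  rw [integral_of_hasDerivAt_of_tendsto (hasDerivAt_arctan_sub_div a hκ.ne')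
    (integrable_lorentzian a hκ.ne') (m := -(π / 2)) (n := π / 2)]
  · ring
  · exact tendsto_nhds_of_tendsto_nhdsWithin <| tendsto_arctan_atBot.comp <|
      (tendsto_atBot_add_const_right _ (-a) tendsto_id).atBot_div_const hκ
  · exact tendsto_nhds_of_tendsto_nhdsWithin <| tendsto_arctan_atTop.comp <|
      (tendsto_atTop_add_const_right _ (-a) tendsto_id).atTop_div_const hκ

theorem integral_Ioo_lorentzian (hκ : κ ≠ 0) {c : ℝ} (hc : 0 ≤ c) :
    ∫ x in Ioo (-c) c, lorentzian κ a x = arctan ((c - a) / κ) + arctan ((c + a) / κ) := by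
  rw [← integral_Ioc_eq_integral_Ioo, ← intervalIntegral.integral_of_le (by linarith),
    intervalIntegral.integral_eq_sub_of_hasDerivAt (fun x _ => hasDerivAt_arctan_sub_div a hκ x)
      (integrable_lorentzian a hκ).intervalIntegrable,
    show (-c - a) / κ = -((c + a) / κ) by ring, arctan_neg, sub_neg_eq_add]

theorem setIntegral_lorentzian_abs_ge (hκ : 0 < κ) {c : ℝ} (hc : 0 ≤ c) :
    ∫ x in {x | c ≤ |x|}, lorentzian κ a x
      = π - arctan ((c - a) / κ) - arctan ((c + a) / κ) := by
  have htail : {x : ℝ | c ≤ |x|} = (Ioo (-c) c)ᶜ := by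
    ext x
    simp only [mem_ofPred_eq, mem_compl_iff, mem_Ioo, not_and_or, not_lt, le_abs']
  rw [htail, setIntegral_compl measurableSet_Ioo (integrable_lorentzian a hκ.ne'),
    integral_lorentzian a hκ, integral_Ioo_lorentzian a hκ.ne' hc]
  ring

end Lorentzian

theorem abs_sum_mul_div_le_sum_lorentzian {ι : Type*} (s : Finset ι) {κ t W : ℝ}
    (hκ : 0 ≤ κ) (ht : 0 ≤ t) (a g : ι → ℝ) (hg : ∀ i, 0 ≤ g i) (hgW : ∀ i, g i ≤ W)
    (x : ℝ) :
    |∑ i ∈ s, κ * t * (g i / ((x - a i) ^ 2 + κ ^ 2))|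
      ≤ t * W * ∑ i ∈ s, lorentzian κ (a i) x := by
  rw [Finset.mul_sum]
  refine (Finset.abs_sum_le_sum_abs _ _).trans (Finset.sum_le_sum fun i _ => ?_)
  rw [abs_of_nonneg (by have := hg i; positivity), lorentzian]
  calc κ * t * (g i / ((x - a i) ^ 2 + κ ^ 2))
      = t * g i * (κ / ((x - a i) ^ 2 + κ ^ 2)) := by ring
    _ ≤ t * W * (κ / ((x - a i) ^ 2 + κ ^ 2)) := by gcongr; exact hgW i

theorem Finset.sum_Icc_one_eq_sum_range {β : Type*} [AddCommMonoid β] (f : ℕ → β) (n : ℕ) :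
    ∑ i ∈ Finset.Icc 1 n, f i = ∑ i ∈ Finset.range n, f (i + 1) := by
  rw [Finset.range_eq_Ico, Finset.sum_Ico_add', Finset.Ico_add_one_right_eq_Icc]

theorem sum_range_arctan_mul_div {κ δ : ℝ} (hκ : 0 < κ) (hδ : 0 < δ) (N : ℕ) :
    ∑ k ∈ Finset.range (N + 1), arctan (k * δ / κ)
      = N * (π / 2) - ∑ n ∈ Finset.Icc 1 N, arctan (κ / (n * δ)) := by
  induction N with
  | zero => simp
  | succ N ih =>
    have hpos : 0 < ((N + 1 : ℕ) : ℝ) * δ / κ := by positivity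
    rw [Finset.sum_range_succ, ih, Finset.sum_Icc_succ_top (by omega),
      ← inv_div (_ * δ) κ, arctan_inv_of_pos hpos]
    push_cast
    ring

theorem sum_setIntegral_lorentzian_abs_ge_grid {κ δ c : ℝ} (hκ : 0 < κ) (hδ : 0 < δ)
    (N : ℕ) (hc : 2 * c = N * δ) :
    ∑ k ∈ Finset.range (N + 1), ∫ x in {x | c ≤ |x|}, lorentzian κ (-c + k * δ) x
      = π + 2 * ∑ n ∈ Finset.Icc 1 N, arctan (κ / (n * δ)) := by
  have hc0 : 0 ≤ c := by nlinarith [N.cast_nonneg (α := ℝ)]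
  have hreflect : ∑ k ∈ Finset.range (N + 1), arctan ((c - (-c + k * δ)) / κ)
      = ∑ k ∈ Finset.range (N + 1), arctan (k * δ / κ) := by
    rw [← Finset.sum_range_reflect]
    refine Finset.sum_congr rfl fun k hk => ?_
    rw [Finset.mem_range] at hk
    rw [Nat.add_sub_cancel, Nat.cast_sub (by omega)]
    congr 2
    linarith
  simp only [setIntegral_lorentzian_abs_ge _ hκ hc0, Finset.sum_sub_distrib, hreflect,
    add_neg_cancel_left, sum_range_arctan_mul_div hκ hδ, Finset.sum_const, Finset.card_range,
    nsmul_eq_mul, Nat.cast_add, Nat.cast_one]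
  ring

/-- Tail bound for the sum-of-Lorentzians approximation `Γ̂` built from `M` equally spaced
Lorentzians of width `κ` sampling a bounded nonnegative function `Γ`:
`∫_{|ω| ≥ ω_c} |Γ̂(ω)| dω ≤ δ Γ_max + (2δΓ_max/π) ∑_{n=1}^{M−1} arctan(κ/(nδ))`. -/
theorem stmt_5 (Γ : ℝ → ℝ) (Γmax ωc κ : ℝ) (M : ℕ)
    (hωc : 0 < ωc) (hκ : 0 < κ) (hM : 2 ≤ M)
    (hnn : ∀ ω, 0 ≤ Γ ω) (hbdd : ∀ ω, Γ ω ≤ Γmax)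
    (δ : ℝ) (hδ : δ = 2 * ωc / ((M : ℝ) - 1))
    (ωn : ℕ → ℝ) (hωn : ∀ n, ωn n = -ωc + ((n : ℝ) - 1) * δ)
    (Γhat : ℝ → ℝ)
    (hΓhat : ∀ ω, Γhat ω = ∑ n ∈ Finset.Icc 1 M,
        (κ * δ / Real.pi) * (Γ (ωn n) / ((ω - ωn n) ^ 2 + κ ^ 2))) :
    ∫ ω in {ω : ℝ | ωc ≤ |ω|}, |Γhat ω|
      ≤ δ * Γmax + (2 * δ * Γmax / Real.pi) *
          ∑ n ∈ Finset.Icc 1 (M - 1), Real.arctan (κ / ((n : ℝ) * δ)) := by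
  obtain ⟨N, rfl⟩ : ∃ N, M = N + 1 := ⟨M - 1, by omega⟩
  have hN : (0 : ℝ) < N := Nat.cast_pos.mpr (by omega)
  rw [Nat.cast_add_one, add_sub_cancel_right] at hδ
  have hδpos : 0 < δ := hδ ▸ by positivity
  have hgrid : 2 * ωc = N * δ := by rw [hδ]; field_simp
  have hbound (ω : ℝ) : |Γhat ω|
      ≤ δ / π * Γmax * ∑ n ∈ Finset.Icc 1 (N + 1), lorentzian κ (ωn n) ω := by
    rw [hΓhat]
    simp only [mul_div_assoc κ δ π]
    exact abs_sum_mul_div_le_sum_lorentzian _ hκ.le (by positivity) ωn (Γ ∘ ωn)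
      (fun _ => hnn _) (fun _ => hbdd _) ω
  have hint : Integrable fun ω =>
      δ / π * Γmax * ∑ n ∈ Finset.Icc 1 (N + 1), lorentzian κ (ωn n) ω :=
    (integrable_finsetSum _ fun n _ => integrable_lorentzian (ωn n) hκ.ne').const_mul _
  have hωn_succ (k : ℕ) : ωn (k + 1) = -ωc + k * δ := by
    rw [hωn, Nat.cast_add_one, add_sub_cancel_right]
  calc ∫ ω in {ω : ℝ | ωc ≤ |ω|}, |Γhat ω|
      ≤ ∫ ω in {ω : ℝ | ωc ≤ |ω|},
          δ / π * Γmax * ∑ n ∈ Finset.Icc 1 (N + 1), lorentzian κ (ωn n) ω :=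
        integral_mono_of_nonneg (.of_forall fun _ => abs_nonneg _) hint.integrableOn
          (.of_forall hbound)
    _ = δ / π * Γmax * ∑ n ∈ Finset.Icc 1 (N + 1),
          ∫ ω in {ω : ℝ | ωc ≤ |ω|}, lorentzian κ (ωn n) ω := by
        rw [integral_const_mul, integral_finsetSum _ fun n _ =>
          (integrable_lorentzian (ωn n) hκ.ne').integrableOn]
    _ = δ / π * Γmax * (π + 2 * ∑ n ∈ Finset.Icc 1 N, arctan (κ / (n * δ))) := by
        rw [← sum_setIntegral_lorentzian_abs_ge_grid hκ hδpos N hgrid,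
          Finset.sum_Icc_one_eq_sum_range]
        simp only [hωn_succ]
    _ = _ := by
        rw [Nat.add_sub_cancel]
        field_simp
end

section
/- Let ψ₀ be a vector in a Hilbert space with P·ψ₀ = ψ₀ for an orthogonal projection P, let Q = I − P, let H(t) be a family of bounded self-adjoint operators with propagator U(t,0), let H_P(t) = P·H(t)·P with propagator U_P(t,0), and set ψ(t) = U(t,0)ψ₀, ψ_P(t) = U_P(t,0)ψ₀. Then ‖ψ(t) − ψ_P(t)‖ ≤ ‖Q·ψ(t)‖ + ∫₀^t ‖P·H(s)·Q·ψ(s)‖ ds. -/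
/-!
The error `e(s) = ψ_P(s) − P ψ(s)` vanishes at `0` and solves the compressed Schrödinger equation
`e' = −i H_P e + i P H Q ψ`, because `P H ψ = H_P (P ψ) + P H Q ψ`. Pairing `e(s)` with
`U_P(s,0) a`, where `U_P(t,0) a = e(t)`, kills the self-adjoint part of the derivative, so
`‖e(t)‖² = ∫₀^t ⟪U_P(s,0) a, i P H Q ψ(s)⟫ ds ≤ ‖e(t)‖ ∫₀^t ‖P H Q ψ(s)‖ ds` by unitarity.
Finally `ψ − ψ_P = Q ψ − e`.
-/

open Complex

section

variable {H : Type*} [NormedAddCommGroup H] [InnerProductSpace ℂ H]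

theorem inner_compress_left {P A : H →L[ℂ] H}
    (hP : ∀ x y, (inner ℂ (P x) y : ℂ) = inner ℂ x (P y))
    (hA : ∀ x y, (inner ℂ (A x) y : ℂ) = inner ℂ x (A y)) (x y : H) :
    (inner ℂ (P (A (P x))) y : ℂ) = inner ℂ x (P (A (P y))) := by
  rw [hP, hA, hP]

theorem hasDerivAt_inner_of_schrodinger {K : H →L[ℂ] H}
    (hK : ∀ x y, (inner ℂ (K x) y : ℂ) = inner ℂ x (K y))
    {u v : ℝ → H} {f : H} {s : ℝ} (hu : HasDerivAt u (-(I • K (u s))) s)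
    (hv : HasDerivAt v (-(I • K (v s)) + f) s) :
    HasDerivAt (fun τ => (inner ℂ (u τ) (v τ) : ℂ)) (inner ℂ (u s) f) s := by
  refine (hu.inner ℂ hv).congr_deriv ?_
  simp only [inner_add_right, inner_neg_right, inner_smul_right, inner_neg_left,
    inner_smul_left, conj_I, hK]
  ring

theorem norm_le_integral_norm_of_schrodinger {K : ℝ → H →L[ℂ] H}
    (hK : ∀ s x y, (inner ℂ (K s x) y : ℂ) = inner ℂ x (K s y))
    {W : ℝ → H →L[ℂ] H} (hWiso : ∀ s x, ‖W s x‖ = ‖x‖)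
    (hWderiv : ∀ x s, HasDerivAt (fun τ => W τ x) (-(I • K s (W s x))) s)
    {e f : ℝ → H} (he : ∀ s, HasDerivAt e (-(I • K s (e s)) + f s) s) (he0 : e 0 = 0)
    (hf : Continuous f) {t : ℝ} (ht : 0 ≤ t) (hWt : Function.Surjective (W t)) :
    ‖e t‖ ≤ ∫ s in (0:ℝ)..t, ‖f s‖ := by
  obtain ⟨a, ha⟩ := hWt (e t)
  have hWa : Continuous fun s => W s a :=
    continuous_iff_continuousAt.2 fun s => (hWderiv a s).continuousAt
  have hderiv : ∀ s, HasDerivAt (fun τ => (inner ℂ (W τ a) (e τ) : ℂ)) (inner ℂ (W s a) (f s)) s :=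
    fun s => hasDerivAt_inner_of_schrodinger (hK s) (hWderiv a s) (he s)
  have hftc := intervalIntegral.integral_eq_sub_of_hasDerivAt (fun s _ => hderiv s)
    ((hWa.inner hf).intervalIntegrable 0 t)
  simp only [ha, he0, inner_zero_right, sub_zero, inner_self_eq_norm_sq_to_K] at hftc
  have hsq : ‖e t‖ ^ 2 ≤ ‖e t‖ * ∫ s in (0:ℝ)..t, ‖f s‖ := calc
    ‖e t‖ ^ 2 = ‖∫ s in (0:ℝ)..t, (inner ℂ (W s a) (f s) : ℂ)‖ := by rw [hftc]; simp
    _ ≤ ∫ s in (0:ℝ)..t, ‖e t‖ * ‖f s‖ := by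
      refine intervalIntegral.norm_integral_le_of_norm_le ht (.of_forall fun s _ => ?_)
        ((continuous_const.mul hf.norm).intervalIntegrable 0 t)
      calc ‖(inner ℂ (W s a) (f s) : ℂ)‖ ≤ ‖W s a‖ * ‖f s‖ := norm_inner_le_norm _ _
        _ = ‖e t‖ * ‖f s‖ := by rw [hWiso, ← hWiso t, ha]
    _ = ‖e t‖ * ∫ s in (0:ℝ)..t, ‖f s‖ := intervalIntegral.integral_const_mul _ _
  rcases (norm_nonneg (e t)).eq_or_lt with h | h
  · rw [← h]
    exact intervalIntegral.integral_nonneg ht fun s _ => norm_nonneg _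
  · nlinarith

theorem hasDerivAt_sub_compress {P A : H →L[ℂ] H} (hP : P.comp P = P) {u v : ℝ → H} {s : ℝ}
    (hu : HasDerivAt u (-(I • A (u s))) s) (hv : HasDerivAt v (-(I • P (A (P (v s))))) s) :
    HasDerivAt (fun τ => v τ - P (u τ))
      (-(I • P (A (P (v s - P (u s))))) + I • P (A ((1 - P) (u s)))) s := by
  have hPP : ∀ x, P (P x) = P x := fun x => congrArg (· x) hP
  have hPu : HasDerivAt (fun τ => P (u τ)) (P (-(I • A (u s)))) s :=
    (P.restrictScalars ℝ).hasFDerivAt.comp_hasDerivAt s hu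
  refine (hv.sub hPu).congr_deriv ?_
  simp only [map_sub, hPP, sub_apply, one_apply_eq_self, map_neg, map_smul]
  module

end

theorem stmt_12_general
    {H : Type*} [NormedAddCommGroup H] [InnerProductSpace ℂ H]
    (P : H →L[ℂ] H) (hPproj : P.comp P = P)
    (hPsa : ∀ x y, (inner ℂ (P x) y : ℂ) = inner ℂ x (P y))
    (Ham : ℝ → H →L[ℂ] H) (hc : Continuous Ham)
    (hsa : ∀ t x y, (inner ℂ (Ham t x) y : ℂ) = inner ℂ x (Ham t y))
    (HamP : ℝ → H →L[ℂ] H) (hHamP : ∀ t, HamP t = P.comp ((Ham t).comp P))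
    (U UP : ℝ → ℝ → H →L[ℂ] H)
    (hUPiso : ∀ t s x, ‖UP t s x‖ = ‖x‖)
    (hUid : ∀ s, U s s = 1) (hUPid : ∀ s, UP s s = 1)
    (hUPcomp : ∀ t s r, (UP t s).comp (UP s r) = UP t r)
    (hUderiv : ∀ s x t,
      HasDerivAt (fun τ => U τ s x) (-(Complex.I • (Ham t (U t s x)))) t)
    (hUPderiv : ∀ s x t,
      HasDerivAt (fun τ => UP τ s x) (-(Complex.I • (HamP t (UP t s x)))) t)
    (ψ₀ : H) (hψ₀ : P ψ₀ = ψ₀) (t : ℝ) (ht : 0 ≤ t) :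
    ‖U t 0 ψ₀ - UP t 0 ψ₀‖
      ≤ ‖(1 - P) (U t 0 ψ₀)‖ + ∫ s in (0:ℝ)..t, ‖P (Ham s ((1 - P) (U s 0 ψ₀)))‖ := by
  simp only [hHamP] at hUPderiv
  have hψ : Continuous fun s => U s 0 ψ₀ :=
    continuous_iff_continuousAt.2 fun s => (hUderiv 0 ψ₀ s).continuousAt
  have hsurj : Function.Surjective (UP t 0) := fun x =>
    ⟨UP 0 t x, by rw [← ContinuousLinearMap.comp_apply, hUPcomp, hUPid, one_apply_eq_self]⟩
  have he : ‖UP t 0 ψ₀ - P (U t 0 ψ₀)‖ ≤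
      ∫ s in (0:ℝ)..t, ‖I • P (Ham s ((1 - P) (U s 0 ψ₀)))‖ :=
    norm_le_integral_norm_of_schrodinger (K := fun s => P.comp ((Ham s).comp P))
      (fun s => inner_compress_left hPsa (hsa s)) (hUPiso · 0) (hUPderiv 0)
      (e := fun s => UP s 0 ψ₀ - P (U s 0 ψ₀)) (f := fun s => I • P (Ham s ((1 - P) (U s 0 ψ₀))))
      (fun s => hasDerivAt_sub_compress hPproj (hUderiv 0 ψ₀ s) (hUPderiv 0 ψ₀ s))
      (by simp [hUid, hUPid, hψ₀]) (continuous_const.smul (by fun_prop)) ht hsurj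
  simp only [norm_smul, norm_I, one_mul] at he
  calc ‖U t 0 ψ₀ - UP t 0 ψ₀‖ = ‖(1 - P) (U t 0 ψ₀) - (UP t 0 ψ₀ - P (U t 0 ψ₀))‖ := by
        rw [sub_apply, one_apply_eq_self, sub_sub_sub_cancel_right]
    _ ≤ ‖(1 - P) (U t 0 ψ₀)‖ + ‖UP t 0 ψ₀ - P (U t 0 ψ₀)‖ := norm_sub_le _ _
    _ ≤ _ := by gcongr

/-- Lemma 1 of the paper (frequency-cutoff decomposition): if `P` is an orthogonal
projection with `P ψ₀ = ψ₀`, `Q = 1 − P`, `Ham(t)` a continuous family of bounded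
self-adjoint operators with propagator `U`, and `U_P` the propagator of
`H_P(t) = P Ham(t) P`, then with `ψ(t) = U(t,0)ψ₀` and `ψ_P(t) = U_P(t,0)ψ₀`,
`‖ψ(t) − ψ_P(t)‖ ≤ ‖Q ψ(t)‖ + ∫₀^t ‖P Ham(s) Q ψ(s)‖ ds`. -/
theorem stmt_12
    {H : Type*} [NormedAddCommGroup H] [InnerProductSpace ℂ H] [CompleteSpace H]
    (P : H →L[ℂ] H) (hPproj : P.comp P = P)
    (hPsa : ∀ x y, (inner ℂ (P x) y : ℂ) = inner ℂ x (P y))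
    (Ham : ℝ → H →L[ℂ] H) (hc : Continuous Ham)
    (hsa : ∀ t x y, (inner ℂ (Ham t x) y : ℂ) = inner ℂ x (Ham t y))
    (HamP : ℝ → H →L[ℂ] H) (hHamP : ∀ t, HamP t = P.comp ((Ham t).comp P))
    (U UP : ℝ → ℝ → H →L[ℂ] H)
    (hUiso : ∀ t s x, ‖U t s x‖ = ‖x‖) (hUPiso : ∀ t s x, ‖UP t s x‖ = ‖x‖)
    (hUid : ∀ s, U s s = 1) (hUPid : ∀ s, UP s s = 1)
    (hUcomp : ∀ t s r, (U t s).comp (U s r) = U t r)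
    (hUPcomp : ∀ t s r, (UP t s).comp (UP s r) = UP t r)
    (hUderiv : ∀ s x t,
      HasDerivAt (fun τ => U τ s x) (-(Complex.I • (Ham t (U t s x)))) t)
    (hUPderiv : ∀ s x t,
      HasDerivAt (fun τ => UP τ s x) (-(Complex.I • (HamP t (UP t s x)))) t)
    (ψ₀ : H) (hψ₀ : P ψ₀ = ψ₀) (t : ℝ) (ht : 0 ≤ t) :
    ‖U t 0 ψ₀ - UP t 0 ψ₀‖
      ≤ ‖(1 - P) (U t 0 ψ₀)‖ + ∫ s in (0:ℝ)..t, ‖P (Ham s ((1 - P) (U s 0 ψ₀)))‖ :=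
  stmt_12_general P hPproj hPsa Ham hc hsa HamP hHamP U UP hUPiso hUid hUPid hUPcomp hUderiv
    hUPderiv ψ₀ hψ₀ t ht
end

section
/- Let G : [0,t] → ℂ be absolutely continuous with |G(s)| ≤ B for all s and esssup_{s∈[0,t]}|G'(s)| ≤ B·γ. Define H(ω) = ∫₀^t G(s)·e^{−iω(t−s)} ds for ω ≠ 0. Then |H(ω)| ≤ B·(2 + γ·t)/|ω|. -/
/-!
Integrate by parts against `F(s) = e^{-iω(t-s)}/(iω)`, a primitive of the oscillating factor
with `‖F‖ = 1/|ω|`: the two boundary terms are each at most `B/|ω|`, and the remaining integral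
`∫ G' F` is at most `Bγt/|ω|`. Since `G` is only the primitive of an integrable `G'`, integration
by parts is obtained from Fubini's theorem on the triangle `{τ ≤ s}` rather than from the
product rule.
-/

open MeasureTheory Set

section
variable {𝕜 : Type*} [RCLike 𝕜] {a b : ℝ}

theorem integral_primitive_mul_eq_integral_mul_integral {f g : ℝ → 𝕜} (hab : a ≤ b)
    (hf : IntervalIntegrable f volume a b) (hg : IntervalIntegrable g volume a b) :
    ∫ s in a..b, (∫ τ in a..s, f τ) * g s = ∫ τ in a..b, f τ * ∫ s in τ..b, g s := by
  set μ := volume.restrict (Ioc a b)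
  let k : ℝ → ℝ → 𝕜 := fun τ => (Ici τ).indicator fun s => f τ * g s
  have hk : Integrable (Function.uncurry k) (μ.prod μ) := by
    have hind : Function.uncurry k = {p : ℝ × ℝ | p.1 ≤ p.2}.indicator fun p => f p.1 * g p.2 := by
      ext ⟨τ, s⟩
      by_cases h : τ ≤ s <;> simp [k, h]
    rw [intervalIntegrable_iff_integrableOn_Ioc_of_le hab] at hf hg
    rw [hind]
    exact (hf.mul_prod hg).indicator (measurableSet_le measurable_fst measurable_snd)
  have hinner_s : ∀ s ∈ Ioc a b, ∫ τ, k τ s ∂μ = (∫ τ in a..s, f τ) * g s := by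
    intro s hs
    have hks : (fun τ => k τ s) = (Iic s).indicator fun τ => f τ * g s := by
      ext τ; by_cases h : τ ≤ s <;> simp [k, h]
    rw [hks, integral_indicator measurableSet_Iic, Measure.restrict_restrict measurableSet_Iic,
      Iic_inter_Ioc_of_le hs.2, integral_mul_const, intervalIntegral.integral_of_le hs.1.le]
  have hinner_τ : ∀ τ ∈ Ioc a b, ∫ s, k τ s ∂μ = f τ * ∫ s in τ..b, g s := by
    intro τ hτ
    have hIcc : Ici τ ∩ Ioc a b = Icc τ b := by grind
    rw [integral_indicator measurableSet_Ici, Measure.restrict_restrict measurableSet_Ici, hIcc,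
      integral_Icc_eq_integral_Ioc, integral_const_mul, ← intervalIntegral.integral_of_le hτ.2]
  calc ∫ s in a..b, (∫ τ in a..s, f τ) * g s = ∫ s, ∫ τ, k τ s ∂μ ∂μ := by
        rw [intervalIntegral.integral_of_le hab]
        exact (setIntegral_congr_fun measurableSet_Ioc hinner_s).symm
    _ = ∫ τ, ∫ s, k τ s ∂μ ∂μ := (integral_integral_swap hk).symm
    _ = ∫ τ in a..b, f τ * ∫ s in τ..b, g s := by
        rw [intervalIntegral.integral_of_le hab]
        exact setIntegral_congr_fun measurableSet_Ioc hinner_τ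

theorem integral_mul_eq_sub_of_eq_primitive {G G' F f : ℝ → 𝕜} (hab : a ≤ b)
    (hG' : IntegrableOn G' (Icc a b)) (hG : ∀ s ∈ Icc a b, G s = G a + ∫ τ in a..s, G' τ)
    (hF : ∀ s ∈ Icc a b, HasDerivAt F (f s) s) (hf : IntegrableOn f (Icc a b)) :
    ∫ s in a..b, G s * f s = G b * F b - G a * F a - ∫ s in a..b, G' s * F s := by
  rw [← uIcc_of_le hab] at hG' hf
  have hG'i : IntervalIntegrable G' volume a b := hG'.intervalIntegrable
  have hfi : IntervalIntegrable f volume a b := hf.intervalIntegrable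
  have hA : ContinuousOn (fun s => ∫ τ in a..s, G' τ) (uIcc a b) :=
    intervalIntegral.continuousOn_primitive_interval hG'
  have hFc : ContinuousOn F (uIcc a b) := fun s hs =>
    (hF s (by rwa [uIcc_of_le hab] at hs)).continuousAt.continuousWithinAt
  have hftc : ∀ τ ∈ Icc a b, ∫ s in τ..b, f s = F b - F τ := fun τ hτ =>
    intervalIntegral.integral_eq_sub_of_hasDerivAt
      (fun s hs => hF s (Icc_subset_Icc hτ.1 le_rfl (by rwa [uIcc_of_le hτ.2] at hs)))
      (hfi.mono_set (uIcc_subset_uIcc (by rwa [uIcc_of_le hab]) right_mem_uIcc))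
  calc ∫ s in a..b, G s * f s
      = ∫ s in a..b, (G a * f s + (∫ τ in a..s, G' τ) * f s) := by
        refine intervalIntegral.integral_congr fun s hs => ?_
        rw [uIcc_of_le hab] at hs
        simp only [hG s hs, add_mul]
    _ = G a * (F b - F a) + ∫ τ in a..b, G' τ * (F b - F τ) := by
        rw [intervalIntegral.integral_add (hfi.const_mul _) (hfi.continuousOn_mul hA),
          intervalIntegral.integral_const_mul, hftc a ⟨le_rfl, hab⟩,
          integral_primitive_mul_eq_integral_mul_integral hab hG'i hfi]
        congr 1
        refine intervalIntegral.integral_congr fun τ hτ => ?_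
        rw [uIcc_of_le hab] at hτ
        simp only [hftc τ hτ]
    _ = G a * (F b - F a) + ((G b - G a) * F b - ∫ τ in a..b, G' τ * F τ) := by
        simp only [mul_sub]
        rw [intervalIntegral.integral_sub (hG'i.mul_const _) (hG'i.mul_continuousOn hFc),
          intervalIntegral.integral_mul_const, hG b ⟨hab, le_rfl⟩, add_sub_cancel_left]
    _ = G b * F b - G a * F a - ∫ s in a..b, G' s * F s := by ring
end

section
open Complex

theorem norm_cexp_neg_I_mul_sub (ω t s : ℝ) : ‖cexp (-(I * ω * (t - s)))‖ = 1 := by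
  rw [norm_exp]; simp

theorem hasDerivAt_cexp_neg_I_mul_sub_div {ω : ℝ} (hω : ω ≠ 0) (t s : ℝ) :
    HasDerivAt (fun s : ℝ => cexp (-(I * ω * (t - s))) / (I * ω))
      (cexp (-(I * ω * (t - s)))) s := by
  have hc : I * (ω : ℂ) ≠ 0 := mul_ne_zero I_ne_zero (ofReal_ne_zero.2 hω)
  have harg : HasDerivAt (fun z : ℂ => -(I * ω * (t - z))) (I * ω) s := by
    simpa using (((hasDerivAt_id (s : ℂ)).const_sub (t : ℂ)).const_mul (I * ω)).fun_neg
  convert (harg.cexp.div_const (I * ω)).comp_ofReal using 1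
  exact (mul_div_cancel_right₀ _ hc).symm

end

theorem stmt_18_general (t B γ ω : ℝ) (ht : 0 ≤ t) (hω : ω ≠ 0)
    (G G' : ℝ → ℂ)
    (hInt : IntegrableOn G' (Set.Icc 0 t))
    (hFTC : ∀ s ∈ Set.Icc (0:ℝ) t, G s = G 0 + ∫ τ in (0:ℝ)..s, G' τ)
    (hGb : ∀ s ∈ Set.Icc (0:ℝ) t, ‖G s‖ ≤ B)
    (hG'b : ∀ᵐ s ∂(volume.restrict (Set.Icc (0:ℝ) t)), ‖G' s‖ ≤ B * γ) :
    ‖∫ s in (0:ℝ)..t, G s * Complex.exp (-(Complex.I * (ω : ℂ) * ((t : ℂ) - (s : ℂ))))‖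
      ≤ B * (2 + γ * t) / |ω| := by
  set F : ℝ → ℂ := fun s => Complex.exp (-(Complex.I * ω * (t - s))) / (Complex.I * ω)
  have hF : ∀ s, ‖F s‖ = 1 / |ω| := fun s => by
    simp [F, norm_cexp_neg_I_mul_sub]
  have hG'F : ‖∫ s in (0:ℝ)..t, G' s * F s‖ ≤ B * γ / |ω| * t := by
    have := intervalIntegral.norm_integral_le_of_norm_le_const_ae (f := fun s => G' s * F s)
      (C := B * γ / |ω|) (a := 0) (b := t) ?_
    · rwa [sub_zero, abs_of_nonneg ht] at this
    rw [ae_restrict_iff' measurableSet_Icc] at hG'b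
    filter_upwards [hG'b] with s hs hsI
    rw [uIoc_of_le ht] at hsI
    rw [norm_mul, hF, mul_one_div]
    gcongr
    exact hs (Ioc_subset_Icc_self hsI)
  rw [integral_mul_eq_sub_of_eq_primitive ht hInt hFTC
    (fun s _ => hasDerivAt_cexp_neg_I_mul_sub_div hω t s)
    (by fun_prop : Continuous _).integrableOn_Icc]
  calc _ ≤ ‖G t‖ * ‖F t‖ + ‖G 0‖ * ‖F 0‖ + ‖∫ s in (0:ℝ)..t, G' s * F s‖ := by
        grw [norm_sub_le, norm_sub_le, norm_mul, norm_mul]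
    _ ≤ B * (1 / |ω|) + B * (1 / |ω|) + B * γ / |ω| * t := by
        rw [hF, hF]
        gcongr
        exacts [hGb t ⟨ht, le_rfl⟩, hGb 0 ⟨le_rfl, ht⟩]
    _ = B * (2 + γ * t) / |ω| := by ring

/-- Integration-by-parts decay estimate: if `G` is absolutely continuous on `[0,t]` with
`‖G‖ ≤ B` and `‖G'‖ ≤ Bγ` a.e., then for `ω ≠ 0`,
`‖∫₀^t G(s) e^{−iω(t−s)} ds‖ ≤ B(2 + γt)/|ω|`. -/
theorem stmt_18 (t B γ ω : ℝ) (ht : 0 ≤ t) (hB : 0 ≤ B) (hγ : 0 ≤ γ) (hω : ω ≠ 0)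
    (G G' : ℝ → ℂ)
    (hInt : IntegrableOn G' (Set.Icc 0 t))
    (hFTC : ∀ s ∈ Set.Icc (0:ℝ) t, G s = G 0 + ∫ τ in (0:ℝ)..s, G' τ)
    (hGb : ∀ s ∈ Set.Icc (0:ℝ) t, ‖G s‖ ≤ B)
    (hG'b : ∀ᵐ s ∂(volume.restrict (Set.Icc (0:ℝ) t)), ‖G' s‖ ≤ B * γ) :
    ‖∫ s in (0:ℝ)..t, G s * Complex.exp (-(Complex.I * (ω : ℂ) * ((t : ℂ) - (s : ℂ))))‖
      ≤ B * (2 + γ * t) / |ω| :=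
  stmt_18_general t B γ ω ht hω G G' hInt hFTC hGb hG'b
end
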